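/- arXiv:2007.15768 — 2 statements merged into one kernel-verified Lean document; each statement's English description precedes it below -/
import Mathlib

section
/- Let Z be a special symbol of defect 1 and size (m+1,m) and Z' a special symbol of defect 0 and size (m',m') with m' = m or m' = m+1, and suppose D_{Z,Z'} ≠ ∅. Let Ψ' = {c_k, d_l} be a consecutive pair in Z'_I (so l = k or l = k−1). Then (Z, Λ_{Ψ'}) ∈ D_{Z,Z'} if and only if: a_k > c_k and d_k ≥ b_k, when m' = m and l = k; c_k ≥ a_k and b_{k−1} > d_{k−1}, when m' = m and l = k−1; a_k ≥ c_k and d_k > b_k, when m' = m+1 and l = k; c_k > a_k and b_{k−1} ≥ d_{k−1}, when m' = m+1 and l = k−1. (Here a_i, b_i are the rows of Z and c_i, d_i the rows of Z'.) -/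
open scoped symmDiff

/-- A symbol: a pair of finsets of naturals (its two rows, each read in
strictly decreasing order). -/
abbrev Symb :=  Finset ℕ × Finset ℕ

/-- The strictly decreasing enumeration of a finset of naturals. -/
def rowList (s : Finset ℕ) : List ℕ := (s.sort (· ≤ ·)).reverse

/-- The `i`-th entry (0-based) of the strictly decreasing enumeration of `s`. -/
def ent (s : Finset ℕ) (i : ℕ) : Option ℕ := (rowList s)[i]?

/-- Impose a relation on two optional entries whenever both exist. -/
def oRel (r : ℕ → ℕ → Prop) : Option ℕ → Option ℕ → Prop
  | some x, some y => r x y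
  | _, _ => True

/-- `Z` is a special symbol of defect 1 and size `(m+1, m)`. -/
def IsSpecial1 (Z : Symb) (m : ℕ) : Prop :=
  Z.1.card = m + 1 ∧ Z.2.card = m ∧
  (∀ i, oRel (· ≥ ·) (ent Z.1 i) (ent Z.2 i)) ∧
  (∀ i, oRel (· ≥ ·) (ent Z.2 i) (ent Z.1 (i + 1)))

/-- `Z'` is a special symbol of defect 0 and size `(m', m')`. -/
def IsSpecial0 (Z : Symb) (m' : ℕ) : Prop :=
  Z.1.card = m' ∧ Z.2.card = m' ∧
  (∀ i, oRel (· ≥ ·) (ent Z.1 i) (ent Z.2 i)) ∧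
  (∀ i, oRel (· ≥ ·) (ent Z.2 i) (ent Z.1 (i + 1)))

/-- `Z_I`: the entries of `Z` lying in exactly one row (row remembered). -/
def ZI (Z : Symb) : Symb := (Z.1 \ Z.2, Z.2 \ Z.1)

/-- `M` is a subset of `Z_I`. -/
def SubZI (M Z : Symb) : Prop := M.1 ⊆ Z.1 \ Z.2 ∧ M.2 ⊆ Z.2 \ Z.1

/-- `Z` is regular: no degenerate entries. -/
def Regular (Z : Symb) : Prop := Disjoint Z.1 Z.2

/-- `Λ_M`: exchange the rows of the entries of `M`. -/
def lam (Z M : Symb) : Symb := ((Z.1 \ M.1) ∪ M.2, (Z.2 \ M.2) ∪ M.1)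

/-- `S̄_Z = {Λ_M : M ⊆ Z_I}`. -/
def Sbar (Z : Symb) : Set Symb := {Λ | ∃ M, SubZI M Z ∧ Λ = lam Z M}

/-- Size and inequality conditions of `B̄⁺_{Z,Z'}` in the case `m' = m`. -/
def Bm (Λ Λ' : Symb) : Prop :=
  Λ'.1.card = Λ.2.card ∧ Λ'.2.card + 1 = Λ.1.card ∧
  (∀ i, oRel (· > ·) (ent Λ.1 i) (ent Λ'.2 i)) ∧
  (∀ i, oRel (· ≥ ·) (ent Λ'.2 i) (ent Λ.1 (i + 1))) ∧
  (∀ i, oRel (· > ·) (ent Λ.2 i) (ent Λ'.1 (i + 1))) ∧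
  (∀ i, oRel (· ≥ ·) (ent Λ'.1 i) (ent Λ.2 i))

/-- Size and inequality conditions of `B̄⁺_{Z,Z'}` in the case `m' = m + 1`. -/
def Bm1 (Λ Λ' : Symb) : Prop :=
  Λ'.1.card = Λ.2.card + 1 ∧ Λ'.2.card = Λ.1.card ∧
  (∀ i, oRel (· ≥ ·) (ent Λ.1 i) (ent Λ'.2 i)) ∧
  (∀ i, oRel (· > ·) (ent Λ'.2 i) (ent Λ.1 (i + 1))) ∧
  (∀ i, oRel (· ≥ ·) (ent Λ.2 i) (ent Λ'.1 (i + 1))) ∧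
  (∀ i, oRel (· > ·) (ent Λ'.1 i) (ent Λ.2 i))

/-- The relation `B̄⁺_{Z,Z'}`. -/
def BbarPlus (Z Z' : Symb) (m m' : ℕ) (Λ Λ' : Symb) : Prop :=
  Λ ∈ Sbar Z ∧ Λ' ∈ Sbar Z' ∧
  ((m' = m ∧ Bm Λ Λ') ∨ (m' = m + 1 ∧ Bm1 Λ Λ'))

/-- The relation `D_{Z,Z'}`. -/
def DRel (Z Z' : Symb) (m m' : ℕ) (A A' : Symb) : Prop :=
  BbarPlus Z Z' m m' A A' ∧
  A.1.card = m + 1 ∧ A.2.card = m ∧ A'.1.card = m' ∧ A'.2.card = m'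

/-- `{c, d}` is a consecutive pair in `Z_I`. -/
def ConsecPair (Z : Symb) (c d : ℕ) : Prop :=
  c ∈ Z.1 \ Z.2 ∧ d ∈ Z.2 \ Z.1 ∧
  ∀ x ∈ (Z.1 \ Z.2) ∪ (Z.2 \ Z.1), ¬(min c d < x ∧ x < max c d)

/-!
An inequality between the `i`-th entries of two rows, imposed for every `i`, is equivalent to an
inequality between their counting functions `countGe s t = #{x ∈ s | t ≤ x}` imposed for every
`t`. For a special symbol both counting functions are determined by their sum, and this sum is
the same for all members of `S̄_Z`; so an element of `D_{Z,Z'}` forces `(Z, Z')` itself to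
satisfy the inequalities of `B̄⁺_{Z,Z'}`. Moving the pair `{c, d}` changes the counting functions
of `Z'` by `±1` exactly for `t` between `c` and `d`. Of the four counting inequalities, two only
get weaker there and two get tighter, and the tighter ones are the stated comparisons, read off
at the end of that interval.
-/

open Finset

def countGe (s : Finset ℕ) (t : ℕ) : ℕ := #{x ∈ s | t ≤ x}

theorem countGe_zero (s : Finset ℕ) : countGe s 0 = #s := by
  simp [countGe]

theorem countGe_le_card (s : Finset ℕ) (t : ℕ) : countGe s t ≤ #s :=
  card_filter_le _ _

theorem countGe_antitone (s : Finset ℕ) : Antitone (countGe s) := fun _ _ h =>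
  card_le_card fun _ => by simpa only [mem_filter] using And.imp_right h.trans

theorem countGe_union {s u : Finset ℕ} (h : Disjoint s u) (t : ℕ) :
    countGe (s ∪ u) t = countGe s t + countGe u t := by
  rw [countGe, filter_union, card_union_of_disjoint (disjoint_filter_filter h)]; rfl

theorem countGe_singleton (c t : ℕ) : countGe {c} t = if t ≤ c then 1 else 0 := by
  rw [countGe, filter_singleton]; split_ifs <;> rfl

theorem countGe_sdiff_union_singleton {s : Finset ℕ} {c d : ℕ} (hc : c ∈ s) (hd : d ∉ s)
    (t : ℕ) : countGe ((s \ {c}) ∪ {d}) t + countGe {c} t = countGe s t + countGe {d} t := by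
  rw [countGe_union (by simp [hd]), add_right_comm, ← countGe_union sdiff_disjoint,
    sdiff_union_of_subset (singleton_subset_iff.2 hc)]

theorem le_getElem_iff_lt_countP {α : Type*} [LinearOrder α] :
    ∀ {l : List α}, l.Pairwise (· ≥ ·) → ∀ {i : ℕ} (hi : i < l.length) (t : α),
      t ≤ l[i] ↔ i < l.countP (t ≤ ·)
  | [], _, _, hi, _ => absurd hi (Nat.not_lt_zero _)
  | x :: xs, hl, i, hi, t => by
    rw [List.pairwise_cons] at hl
    by_cases htx : t ≤ x
    · cases i with
      | zero => simp [htx]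
      | succ i =>
        simp [htx, le_getElem_iff_lt_countP hl.2 (Nat.lt_of_succ_lt_succ hi)]
    · have hxs : xs.countP (t ≤ ·) = 0 :=
        List.countP_eq_zero.2 fun y hy hty => htx ((of_decide_eq_true hty).trans (hl.1 y hy))
      cases i with
      | zero => simp [htx, hxs]
      | succ i =>
        simp only [List.getElem_cons_succ, List.countP_cons, hxs, htx]
        simpa using fun h : t ≤ xs[i]'(Nat.lt_of_succ_lt_succ hi) =>
          htx (h.trans (hl.1 _ (List.getElem_mem _)))

theorem countGe_eq_countP (s : Finset ℕ) (t : ℕ) :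
    countGe s t = (rowList s).countP (t ≤ ·) := by
  rw [rowList, List.countP_reverse, ← Multiset.coe_countP, sort_eq,
    Multiset.countP_eq_card_filter, countGe, card_def, filter_val]

theorem length_rowList (s : Finset ℕ) : (rowList s).length = #s := by
  simp [rowList]

theorem pairwise_rowList (s : Finset ℕ) : (rowList s).Pairwise (· ≥ ·) := by
  rw [rowList, List.pairwise_reverse]
  exact (pairwise_sort s (· ≤ ·)).imp id

theorem lt_countGe_iff {s : Finset ℕ} {i t : ℕ} :
    i < countGe s t ↔ ∃ x, ent s i = some x ∧ t ≤ x := by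
  by_cases hi : i < (rowList s).length
  · rw [countGe_eq_countP, ← le_getElem_iff_lt_countP (pairwise_rowList s) hi, ent,
      List.getElem?_eq_getElem hi]
    simp
  · have := countGe_le_card s t
    rw [length_rowList] at hi
    simp [ent, List.getElem?_eq_none (by rw [length_rowList]; omega : (rowList s).length ≤ i)]
    omega

theorem mem_of_ent {s : Finset ℕ} {i x : ℕ} (h : ent s i = some x) : x ∈ s := by
  simpa [rowList] using List.mem_of_getElem? h

theorem lt_countGe_of_ent {s : Finset ℕ} {i x t : ℕ} (h : ent s i = some x) (ht : t ≤ x) :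
    i < countGe s t :=
  lt_countGe_iff.2 ⟨x, h, ht⟩

theorem lt_card_of_ent {s : Finset ℕ} {i x : ℕ} (h : ent s i = some x) : i < #s := by
  simpa [countGe_zero] using lt_countGe_of_ent h (Nat.zero_le x)

theorem countGe_le_of_ent {s : Finset ℕ} {i x t : ℕ} (h : ent s i = some x) (ht : x < t) :
    countGe s t ≤ i := by
  by_contra! hi
  obtain ⟨y, hy, hty⟩ := lt_countGe_iff.1 hi
  rw [h, Option.some_inj] at hy
  omega

theorem oRel_ent_some_iff {r : ℕ → ℕ → Prop} {s : Finset ℕ} {i y t : ℕ}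
    (hr : ∀ x, r x y ↔ t ≤ x) (hi : i < #s) :
    oRel r (ent s i) (some y) ↔ i < countGe s t := by
  obtain ⟨x, hx, -⟩ := lt_countGe_iff.1 (show i < countGe s 0 by rwa [countGe_zero])
  rw [lt_countGe_iff, hx]
  simp [oRel, hr]

theorem oRel_some_ent_iff {r : ℕ → ℕ → Prop} {s : Finset ℕ} {i x t : ℕ}
    (hr : ∀ y, r x y ↔ y < t) :
    oRel r (some x) (ent s i) ↔ countGe s t ≤ i := by
  rw [← not_lt, lt_countGe_iff]
  cases ent s i <;> simp [oRel, hr]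

theorem forall_oRel_ent_iff {r : ℕ → ℕ → Prop} {s v : Finset ℕ} {ε δ : ℕ}
    (hr : ∀ x y, r x y ↔ y + ε ≤ x) (hcard : #v ≤ #s + δ) :
    (∀ i, oRel r (ent s i) (ent v (i + δ))) ↔ ∀ t, countGe v t ≤ countGe s (t + ε) + δ := by
  constructor
  · intro h t
    by_contra! hlt
    obtain ⟨y, hy, hty⟩ := lt_countGe_iff.1 (show countGe s (t + ε) + δ < countGe v t by omega)
    obtain ⟨x, hx, -⟩ := lt_countGe_iff.1 (show countGe s (t + ε) < countGe s 0 by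
      have := countGe_le_card v t; rw [countGe_zero]; omega)
    have hxy := h (countGe s (t + ε))
    rw [hx, hy] at hxy
    have := lt_countGe_of_ent hx (show t + ε ≤ x by have := (hr x y).1 hxy; omega)
    omega
  · intro h i
    cases hx : ent s i with
    | none => trivial
    | some x =>
      cases hy : ent v (i + δ) with
      | none => trivial
      | some y =>
        have := h y
        have := lt_countGe_of_ent hy le_rfl
        obtain ⟨x', hx', hle⟩ := lt_countGe_iff.1 (show i < countGe s (y + ε) by omega)
        rw [hx, Option.some_inj] at hx'
        exact (hr x y).2 (hx' ▸ hle)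

theorem bm_iff {X Y : Symb} : Bm X Y ↔ #Y.1 = #X.2 ∧ #Y.2 + 1 = #X.1 ∧
    ∀ t, countGe Y.2 t ≤ countGe X.1 (t + 1) ∧ countGe X.1 t ≤ countGe Y.2 t + 1 ∧
      countGe Y.1 t ≤ countGe X.2 (t + 1) + 1 ∧ countGe X.2 t ≤ countGe Y.1 t := by
  have gt : ∀ x y : ℕ, x > y ↔ y + 1 ≤ x := fun _ _ => Iff.rfl
  have ge : ∀ x y : ℕ, x ≥ y ↔ y + 0 ≤ x := fun _ _ => Iff.rfl
  constructor
  · rintro ⟨h1, h2, p1, p2, p3, p4⟩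
    have q1 := (forall_oRel_ent_iff (δ := 0) gt (by omega)).1 p1
    have q2 := (forall_oRel_ent_iff (δ := 1) ge (by omega)).1 p2
    have q3 := (forall_oRel_ent_iff (δ := 1) gt (by omega)).1 p3
    have q4 := (forall_oRel_ent_iff (δ := 0) ge (by omega)).1 p4
    exact ⟨h1, h2, fun t => ⟨q1 t, q2 t, q3 t, q4 t⟩⟩
  · rintro ⟨h1, h2, q⟩
    exact ⟨h1, h2, (forall_oRel_ent_iff (δ := 0) gt (by omega)).2 fun t => (q t).1,
      (forall_oRel_ent_iff (δ := 1) ge (by omega)).2 fun t => (q t).2.1,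
      (forall_oRel_ent_iff (δ := 1) gt (by omega)).2 fun t => (q t).2.2.1,
      (forall_oRel_ent_iff (δ := 0) ge (by omega)).2 fun t => (q t).2.2.2⟩

theorem bm1_iff_bm {Λ Λ' : Symb} : Bm1 Λ Λ' ↔ Bm Λ' Λ := by
  constructor <;> rintro ⟨h1, h2, h3, h4, h5, h6⟩ <;> exact ⟨by omega, by omega, h6, h5, h4, h3⟩

/-- The counting form of `a_1 ≥ b_1 ≥ a_2 ≥ b_2 ≥ ⋯`. -/
def Interlaced (Z : Symb) : Prop :=
  ∀ t, countGe Z.2 t ≤ countGe Z.1 t ∧ countGe Z.1 t ≤ countGe Z.2 t + 1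

theorem interlaced_of_forall_oRel {Z : Symb}
    (h1 : ∀ i, oRel (· ≥ ·) (ent Z.1 i) (ent Z.2 i))
    (h2 : ∀ i, oRel (· ≥ ·) (ent Z.2 i) (ent Z.1 (i + 1)))
    (hc1 : #Z.2 ≤ #Z.1) (hc2 : #Z.1 ≤ #Z.2 + 1) : Interlaced Z := fun t =>
  ⟨(forall_oRel_ent_iff (ε := 0) (δ := 0) (fun _ _ => Iff.rfl) hc1).1 h1 t,
    (forall_oRel_ent_iff (ε := 0) (δ := 1) (fun _ _ => Iff.rfl) hc2).1 h2 t⟩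

theorem IsSpecial1.interlaced {Z : Symb} {m : ℕ} (h : IsSpecial1 Z m) : Interlaced Z :=
  interlaced_of_forall_oRel h.2.2.1 h.2.2.2 (by rw [h.1, h.2.1]; omega) (by rw [h.1, h.2.1])

theorem IsSpecial0.interlaced {Z : Symb} {m : ℕ} (h : IsSpecial0 Z m) : Interlaced Z :=
  interlaced_of_forall_oRel h.2.2.1 h.2.2.2 (by rw [h.1, h.2.1]) (by rw [h.1, h.2.1]; omega)

theorem countGe_add_countGe_of_mem_sbar {Z Λ : Symb} (h : Λ ∈ Sbar Z) (t : ℕ) :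
    countGe Λ.1 t + countGe Λ.2 t = countGe Z.1 t + countGe Z.2 t := by
  obtain ⟨M, ⟨hM1, hM2⟩, rfl⟩ := h
  have key : ∀ {s u v : Finset ℕ}, v ⊆ s \ u → countGe (s \ v) t + countGe v t = countGe s t :=
    fun hv => by
      rw [← countGe_union sdiff_disjoint, sdiff_union_of_subset (hv.trans sdiff_subset)]
  rw [lam, countGe_union, countGe_union]
  · have := key hM1; have := key hM2; omega
  · exact disjoint_of_subset_left sdiff_subset (disjoint_of_subset_right hM1 disjoint_sdiff)
  · exact disjoint_of_subset_left sdiff_subset (disjoint_of_subset_right hM2 disjoint_sdiff)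

theorem Bm.of_mem_sbar {X Y X' Y' : Symb} (hX : Interlaced X) (hY : Interlaced Y)
    (hX' : X' ∈ Sbar X) (hY' : Y' ∈ Sbar Y) (h : Bm X' Y')
    (h1 : #Y.1 = #X.2) (h2 : #Y.2 + 1 = #X.1) : Bm X Y := by
  refine bm_iff.2 ⟨h1, h2, fun t => ?_⟩
  have := (bm_iff.1 h).2.2 t
  have := countGe_add_countGe_of_mem_sbar hX' t
  have := countGe_add_countGe_of_mem_sbar hX' (t + 1)
  have := countGe_add_countGe_of_mem_sbar hY' t
  have := hX t; have := hX (t + 1); have := hY t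
  omega

theorem countGe_lam_pair_fst {Y : Symb} {c d : ℕ} (hc : c ∈ Y.1) (hd : d ∉ Y.1) (t : ℕ) :
    countGe (lam Y ({c}, {d})).1 t + (if t ≤ c then 1 else 0) =
      countGe Y.1 t + (if t ≤ d then 1 else 0) := by
  have := countGe_sdiff_union_singleton hc hd t
  rwa [countGe_singleton, countGe_singleton] at this

theorem countGe_lam_pair_snd {Y : Symb} {c d : ℕ} (hd : d ∈ Y.2) (hc : c ∉ Y.2) (t : ℕ) :
    countGe (lam Y ({c}, {d})).2 t + (if t ≤ d then 1 else 0) =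
      countGe Y.2 t + (if t ≤ c then 1 else 0) := by
  have := countGe_sdiff_union_singleton hd hc t
  rwa [countGe_singleton, countGe_singleton] at this

theorem card_lam_pair {Y : Symb} {c d : ℕ} (hc : c ∈ Y.1 \ Y.2) (hd : d ∈ Y.2 \ Y.1) :
    #(lam Y ({c}, {d})).1 = #Y.1 ∧ #(lam Y ({c}, {d})).2 = #Y.2 := by
  rw [mem_sdiff] at hc hd
  have h1 := countGe_lam_pair_fst hc.1 hd.2 0
  have h2 := countGe_lam_pair_snd hd.1 hc.2 0
  simp only [countGe_zero, zero_le, if_true] at h1 h2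
  omega

theorem Interlaced.lt_of_ent_same_index {Y : Symb} {i c d : ℕ} (hY : Interlaced Y)
    (hc : ent Y.1 i = some c) (hd : ent Y.2 i = some d) (hcY : c ∉ Y.2) : d < c := by
  have hne : c ≠ d := fun h => hcY (h ▸ mem_of_ent hd)
  have := (hY (c + 1)).1
  have := countGe_le_of_ent hc (lt_add_one c)
  have := fun h : c + 1 ≤ d => lt_countGe_of_ent hd h
  omega

theorem Interlaced.lt_of_ent_next_index {Y : Symb} {i c d : ℕ} (hY : Interlaced Y)
    (hc : ent Y.1 (i + 1) = some c) (hd : ent Y.2 i = some d) (hdY : d ∉ Y.1) : c < d := by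
  have hne : c ≠ d := fun h => hdY (h ▸ mem_of_ent hc)
  have := (hY (d + 1)).2
  have := countGe_le_of_ent hd (lt_add_one d)
  have := fun h : d + 1 ≤ c => lt_countGe_of_ent hc h
  omega

section SwapPair

variable {X Y : Symb} {i c d : ℕ}

theorem bm_lam_right_iff_same_index (hY : Interlaced Y) (hB : Bm X Y)
    (hc : ent Y.1 i = some c) (hd : ent Y.2 i = some d) (hcY : c ∉ Y.2) (hdY : d ∉ Y.1) :
    Bm X (lam Y ({c}, {d})) ↔
      oRel (· > ·) (ent X.1 i) (some c) ∧ oRel (· ≥ ·) (some d) (ent X.2 i) := by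
  obtain ⟨hX1, hX2, hB⟩ := bm_iff.1 hB
  obtain ⟨hΛ1, hΛ2⟩ := card_lam_pair (mem_sdiff.2 ⟨mem_of_ent hc, hcY⟩)
    (mem_sdiff.2 ⟨mem_of_ent hd, hdY⟩)
  have e1 := countGe_lam_pair_fst (mem_of_ent hc) hdY
  have e2 := countGe_lam_pair_snd (mem_of_ent hd) hcY
  have hY1 : ∀ t, t ≤ c → i < countGe Y.1 t := fun _ => lt_countGe_of_ent hc
  have hY2 : ∀ t, d < t → countGe Y.2 t ≤ i := fun _ => countGe_le_of_ent hd
  have hdc := hY.lt_of_ent_same_index hc hd hcY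
  have := lt_card_of_ent hd
  rw [oRel_ent_some_iff (t := c + 1) (fun _ => Iff.rfl) (by omega),
    oRel_some_ent_iff (t := d + 1) (fun _ => Nat.lt_succ_iff.symm), bm_iff]
  constructor
  · rintro ⟨-, -, h⟩
    have := (h c).1; have := (h (d + 1)).2.2.2
    have := hY c; have := hY (d + 1); have := hY1 c le_rfl; have := hY2 (d + 1) (lt_add_one d)
    have e1d := e1 (d + 1); have e2c := e2 c
    split_ifs at e1d e2c <;> omega
  · rintro ⟨h1, h4⟩
    refine ⟨by omega, by omega, fun t => ?_⟩
    have := hB t; have := hY1 t; have := hY2 t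
    have : t ≤ c → countGe X.1 (c + 1) ≤ countGe X.1 (t + 1) :=
      fun h => countGe_antitone X.1 (by omega)
    have : d < t → countGe X.2 t ≤ countGe X.2 (d + 1) :=
      fun h => countGe_antitone X.2 (by omega)
    have e1t := e1 t; have e2t := e2 t
    split_ifs at e1t e2t <;> omega

theorem bm_lam_right_iff_next_index (hY : Interlaced Y) (hB : Bm X Y)
    (hc : ent Y.1 (i + 1) = some c) (hd : ent Y.2 i = some d) (hcY : c ∉ Y.2)
    (hdY : d ∉ Y.1) :
    Bm X (lam Y ({c}, {d})) ↔
      oRel (· ≥ ·) (some c) (ent X.1 (i + 1)) ∧ oRel (· > ·) (ent X.2 i) (some d) := by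
  obtain ⟨hX1, hX2, hB⟩ := bm_iff.1 hB
  obtain ⟨hΛ1, hΛ2⟩ := card_lam_pair (mem_sdiff.2 ⟨mem_of_ent hc, hcY⟩)
    (mem_sdiff.2 ⟨mem_of_ent hd, hdY⟩)
  have e1 := countGe_lam_pair_fst (mem_of_ent hc) hdY
  have e2 := countGe_lam_pair_snd (mem_of_ent hd) hcY
  have hY1 : ∀ t, c < t → countGe Y.1 t ≤ i + 1 := fun _ => countGe_le_of_ent hc
  have hY2 : ∀ t, t ≤ d → i < countGe Y.2 t := fun _ => lt_countGe_of_ent hd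
  have hcd := hY.lt_of_ent_next_index hc hd hdY
  have := lt_card_of_ent hc
  rw [oRel_some_ent_iff (t := c + 1) (fun _ => Nat.lt_succ_iff.symm),
    oRel_ent_some_iff (t := d + 1) (fun _ => Iff.rfl) (by omega), bm_iff]
  constructor
  · rintro ⟨-, -, h⟩
    have := (h (c + 1)).2.1; have := (h d).2.2.1
    have := hY (c + 1); have := hY d; have := hY1 (c + 1) (lt_add_one c); have := hY2 d le_rfl
    have e1d := e1 d; have e2c := e2 (c + 1)
    split_ifs at e1d e2c <;> omega
  · rintro ⟨h2, h3⟩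
    refine ⟨by omega, by omega, fun t => ?_⟩
    have := hB t; have := hY1 t; have := hY2 t
    have : c < t → countGe X.1 t ≤ countGe X.1 (c + 1) :=
      fun h => countGe_antitone X.1 (by omega)
    have : t ≤ d → countGe X.2 (d + 1) ≤ countGe X.2 (t + 1) :=
      fun h => countGe_antitone X.2 (by omega)
    have e1t := e1 t; have e2t := e2 t
    split_ifs at e1t e2t <;> omega

theorem bm_lam_left_iff_same_index (hY : Interlaced Y) (hB : Bm Y X)
    (hc : ent Y.1 i = some c) (hd : ent Y.2 i = some d) (hcY : c ∉ Y.2) (hdY : d ∉ Y.1) :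
    Bm (lam Y ({c}, {d})) X ↔
      oRel (· ≥ ·) (ent X.1 i) (some c) ∧ oRel (· > ·) (some d) (ent X.2 i) := by
  obtain ⟨hX1, hX2, hB⟩ := bm_iff.1 hB
  obtain ⟨hΛ1, hΛ2⟩ := card_lam_pair (mem_sdiff.2 ⟨mem_of_ent hc, hcY⟩)
    (mem_sdiff.2 ⟨mem_of_ent hd, hdY⟩)
  have e1 := countGe_lam_pair_fst (mem_of_ent hc) hdY
  have e2 := countGe_lam_pair_snd (mem_of_ent hd) hcY
  have hY1 : ∀ t, t ≤ c → i < countGe Y.1 t := fun _ => lt_countGe_of_ent hc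
  have hY2 : ∀ t, d < t → countGe Y.2 t ≤ i := fun _ => countGe_le_of_ent hd
  have hdc := hY.lt_of_ent_same_index hc hd hcY
  have := lt_card_of_ent hd
  rw [oRel_ent_some_iff (t := c) (fun _ => Iff.rfl) (by omega),
    oRel_some_ent_iff (t := d) (fun _ => Iff.rfl), bm_iff]
  constructor
  · rintro ⟨-, -, h⟩
    have := (h d).1; have := (h c).2.2.2
    have := hY c; have := hY (d + 1); have := hY1 c le_rfl; have := hY2 (d + 1) (lt_add_one d)
    have e1d := e1 (d + 1); have e2c := e2 c
    split_ifs at e1d e2c <;> omega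
  · rintro ⟨h4, h1⟩
    refine ⟨by omega, by omega, fun t => ?_⟩
    have := hB t; have := hY1 t; have := hY1 (t + 1); have := hY2 t; have := hY2 (t + 1)
    have : t ≤ c → countGe X.1 c ≤ countGe X.1 t :=
      fun h => countGe_antitone X.1 h
    have : d ≤ t → countGe X.2 t ≤ countGe X.2 d :=
      fun h => countGe_antitone X.2 h
    have e1t := e1 t; have e1t' := e1 (t + 1); have e2t := e2 t; have e2t' := e2 (t + 1)
    split_ifs at e1t e1t' e2t e2t' <;> omega

theorem bm_lam_left_iff_next_index (hY : Interlaced Y) (hB : Bm Y X)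
    (hc : ent Y.1 (i + 1) = some c) (hd : ent Y.2 i = some d) (hcY : c ∉ Y.2)
    (hdY : d ∉ Y.1) :
    Bm (lam Y ({c}, {d})) X ↔
      oRel (· > ·) (some c) (ent X.1 (i + 1)) ∧ oRel (· ≥ ·) (ent X.2 i) (some d) := by
  obtain ⟨hX1, hX2, hB⟩ := bm_iff.1 hB
  obtain ⟨hΛ1, hΛ2⟩ := card_lam_pair (mem_sdiff.2 ⟨mem_of_ent hc, hcY⟩)
    (mem_sdiff.2 ⟨mem_of_ent hd, hdY⟩)
  have e1 := countGe_lam_pair_fst (mem_of_ent hc) hdY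
  have e2 := countGe_lam_pair_snd (mem_of_ent hd) hcY
  have hY1 : ∀ t, c < t → countGe Y.1 t ≤ i + 1 := fun _ => countGe_le_of_ent hc
  have hY2 : ∀ t, t ≤ d → i < countGe Y.2 t := fun _ => lt_countGe_of_ent hd
  have hcd := hY.lt_of_ent_next_index hc hd hdY
  have := lt_card_of_ent hc
  rw [oRel_some_ent_iff (t := c) (fun _ => Iff.rfl),
    oRel_ent_some_iff (t := d) (fun _ => Iff.rfl) (by omega), bm_iff]
  constructor
  · rintro ⟨-, -, h⟩
    have := (h d).2.1; have := (h c).2.2.1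
    have := hY (c + 1); have := hY d; have := hY1 (c + 1) (lt_add_one c); have := hY2 d le_rfl
    have e1d := e1 d; have e2c := e2 (c + 1)
    split_ifs at e1d e2c <;> omega
  · rintro ⟨h3, h2⟩
    refine ⟨by omega, by omega, fun t => ?_⟩
    have := hB t; have := hY1 t; have := hY1 (t + 1); have := hY2 t; have := hY2 (t + 1)
    have : c ≤ t → countGe X.1 t ≤ countGe X.1 c :=
      fun h => countGe_antitone X.1 h
    have : t ≤ d → countGe X.2 d ≤ countGe X.2 t :=
      fun h => countGe_antitone X.2 h
    have e1t := e1 t; have e1t' := e1 (t + 1); have e2t := e2 t; have e2t' := e2 (t + 1)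
    split_ifs at e1t e1t' e2t e2t' <;> omega

end SwapPair

theorem self_mem_sbar (Z : Symb) : Z ∈ Sbar Z :=
  ⟨(∅, ∅), ⟨empty_subset _, empty_subset _⟩, by simp [lam]⟩

theorem lam_pair_mem_sbar {Z : Symb} {c d : ℕ} (hc : c ∈ Z.1 \ Z.2) (hd : d ∈ Z.2 \ Z.1) :
    lam Z ({c}, {d}) ∈ Sbar Z :=
  ⟨({c}, {d}), ⟨singleton_subset_iff.2 hc, singleton_subset_iff.2 hd⟩, rfl⟩

theorem dRel_self_iff {Z Z' Λ : Symb} {m m' : ℕ} (hZ1 : #Z.1 = m + 1) (hZ2 : #Z.2 = m)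
    (hΛ : Λ ∈ Sbar Z') (hΛ1 : #Λ.1 = m') (hΛ2 : #Λ.2 = m') :
    DRel Z Z' m m' Z Λ ↔ (m' = m ∧ Bm Z Λ) ∨ (m' = m + 1 ∧ Bm Λ Z) := by
  simp only [DRel, BbarPlus, bm1_iff_bm, self_mem_sbar, hΛ, hZ1, hZ2, hΛ1, hΛ2, true_and,
    and_true]

theorem IsSpecial1.bm_of_dRel {Z Z' A A' : Symb} {m : ℕ} (hZ : IsSpecial1 Z m)
    (hZ' : IsSpecial0 Z' m) (h : DRel Z Z' m m A A') : Bm Z Z' := by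
  obtain ⟨⟨hA, hA', hB | hB⟩, -⟩ := h
  · exact Bm.of_mem_sbar hZ.interlaced hZ'.interlaced hA hA' hB.2 (by rw [hZ'.1, hZ.2.1])
      (by rw [hZ'.2.1, hZ.1])
  · omega

theorem IsSpecial1.bm_of_dRel_succ {Z Z' A A' : Symb} {m : ℕ} (hZ : IsSpecial1 Z m)
    (hZ' : IsSpecial0 Z' (m + 1)) (h : DRel Z Z' m (m + 1) A A') : Bm Z' Z := by
  obtain ⟨⟨hA, hA', hB | hB⟩, -⟩ := h
  · omega
  · exact Bm.of_mem_sbar hZ'.interlaced hZ.interlaced hA' hA (bm1_iff_bm.1 hB.2)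
      (by rw [hZ'.2.1, hZ.1]) (by rw [hZ'.1, hZ.2.1])

theorem stmt0_general (m m' : ℕ) (Z Z' : Symb) (hm : m' = m ∨ m' = m + 1)
    (hZ : IsSpecial1 Z m) (hZ' : IsSpecial0 Z' m')
    (hD : ∃ A A' : Symb, DRel Z Z' m m' A A')
    (k l : ℕ) (hl : 1 ≤ l) (hkl : l = k ∨ l + 1 = k)
    (c d : ℕ) (hc : ent Z'.1 (k - 1) = some c) (hd : ent Z'.2 (l - 1) = some d)
    (hcons : ConsecPair Z' c d) :
    DRel Z Z' m m' Z (lam Z' ({c}, {d})) ↔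
      ((m' = m ∧ l = k ∧
          oRel (· > ·) (ent Z.1 (k - 1)) (some c) ∧
          oRel (· ≥ ·) (some d) (ent Z.2 (k - 1))) ∨
       (m' = m ∧ l + 1 = k ∧
          oRel (· ≥ ·) (some c) (ent Z.1 (k - 1)) ∧
          oRel (· > ·) (ent Z.2 (l - 1)) (some d)) ∨
       (m' = m + 1 ∧ l = k ∧
          oRel (· ≥ ·) (ent Z.1 (k - 1)) (some c) ∧
          oRel (· > ·) (some d) (ent Z.2 (k - 1))) ∨
       (m' = m + 1 ∧ l + 1 = k ∧
          oRel (· > ·) (some c) (ent Z.1 (k - 1)) ∧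
          oRel (· ≥ ·) (ent Z.2 (l - 1)) (some d))) := by
  obtain ⟨hcZ', hdZ', -⟩ := hcons
  obtain ⟨A, A', hAA'⟩ := hD
  obtain ⟨hΛ1, hΛ2⟩ := card_lam_pair hcZ' hdZ'
  rw [dRel_self_iff hZ.1 hZ.2.1 (lam_pair_mem_sbar hcZ' hdZ') (hΛ1.trans hZ'.1)
    (hΛ2.trans hZ'.2.1)]
  rw [mem_sdiff] at hcZ' hdZ'
  obtain ⟨i, rfl⟩ : ∃ i, l = i + 1 := ⟨l - 1, by omega⟩
  rcases hm with rfl | rfl <;> rcases hkl with rfl | rfl <;>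
    simp only [Nat.add_sub_cancel] at hc hd ⊢
  · rw [bm_lam_right_iff_same_index hZ'.interlaced (hZ.bm_of_dRel hZ' hAA') hc hd hcZ'.2 hdZ'.2]
    simp
  · rw [bm_lam_right_iff_next_index hZ'.interlaced (hZ.bm_of_dRel hZ' hAA') hc hd hcZ'.2 hdZ'.2]
    simp
  · rw [bm_lam_left_iff_same_index hZ'.interlaced (hZ.bm_of_dRel_succ hZ' hAA') hc hd hcZ'.2
      hdZ'.2]
    simp
  · rw [bm_lam_left_iff_next_index hZ'.interlaced (hZ.bm_of_dRel_succ hZ' hAA') hc hd hcZ'.2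
      hdZ'.2]
    simp

theorem stmt0 (m m' : ℕ) (Z Z' : Symb) (hm : m' = m ∨ m' = m + 1)
    (hZ : IsSpecial1 Z m) (hZ' : IsSpecial0 Z' m')
    (hD : ∃ A A' : Symb, DRel Z Z' m m' A A')
    (k l : ℕ) (hk : 1 ≤ k) (hl : 1 ≤ l) (hkl : l = k ∨ l + 1 = k)
    (c d : ℕ) (hc : ent Z'.1 (k - 1) = some c) (hd : ent Z'.2 (l - 1) = some d)
    (hcons : ConsecPair Z' c d) :
    DRel Z Z' m m' Z (lam Z' ({c}, {d})) ↔
      ((m' = m ∧ l = k ∧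
          oRel (· > ·) (ent Z.1 (k - 1)) (some c) ∧
          oRel (· ≥ ·) (some d) (ent Z.2 (k - 1))) ∨
       (m' = m ∧ l + 1 = k ∧
          oRel (· ≥ ·) (some c) (ent Z.1 (k - 1)) ∧
          oRel (· > ·) (ent Z.2 (l - 1)) (some d)) ∨
       (m' = m + 1 ∧ l = k ∧
          oRel (· ≥ ·) (ent Z.1 (k - 1)) (some c) ∧
          oRel (· > ·) (some d) (ent Z.2 (k - 1))) ∨
       (m' = m + 1 ∧ l + 1 = k ∧
          oRel (· > ·) (some c) (ent Z.1 (k - 1)) ∧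
          oRel (· ≥ ·) (ent Z.2 (l - 1)) (some d))) :=
  stmt0_general m m' Z Z' hm hZ hZ' hD k l hl hkl c d hc hd hcons
end

section
/- Let Z be a special symbol of defect 1 and size (m+1,m) and Z' a special symbol of defect 0 and size (m',m') with m' = m or m' = m+1. Suppose Ψ and Ψ' are two consecutive pairs in Z'_I such that (Z, Λ_Ψ) ∈ D_{Z,Z'} and (Z, Λ_{Ψ'}) ∈ D_{Z,Z'}. Then either Ψ = Ψ' or Ψ ∩ Ψ' = ∅. -/
open scoped symmDiff

/-!
If two consecutive pairs of `Z'_I` share exactly one entry, say the first-row entry `c`, their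
second-row entries lie on opposite sides of `c`. Moving `c` into the second row therefore puts it
at adjacent positions `j` and `j + 1` of the second rows of the two symbols `Λ_Ψ`, `Λ_Ψ'`. Both
interlace with the first row of `Z`, so its entry `z` at position `j + 1` satisfies `z ≤ c < z`
(if `m' = m`) or `z < c ≤ z` (if `m' = m + 1`). A shared second-row entry is handled in the
same way against the second row of `Z`.
-/

lemma rowList_pairwise_gt (s : Finset ℕ) : (rowList s).Pairwise (· > ·) :=
  List.pairwise_reverse.2 (Finset.sortedLT_sort s).pairwise

lemma length_filter_rowList (s : Finset ℕ) (p : ℕ → Prop) [DecidablePred p] :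
    ((rowList s).filter (fun y => p y)).length = (s.filter p).card := by
  have hnd : (rowList s).Nodup := by simp [rowList, Finset.sort_nodup]
  rw [← List.toFinset_card_of_nodup (hnd.filter _), List.toFinset_filter]
  simp [rowList]

lemma List.getElem?_length_filter_gt {α : Type*} [LinearOrder α] {l : List α}
    (h : l.Pairwise (· > ·)) {x : α} (hx : x ∈ l) :
    l[(l.filter (fun y => x < y)).length]? = some x := by
  induction l with
  | nil => cases hx
  | cons a t ih =>
    rw [List.pairwise_cons] at h
    rcases List.mem_cons.1 hx with rfl | hx'
    · rw [List.filter_cons_of_neg (by simp),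
        List.filter_eq_nil_iff.2 fun y hy => by simpa using (h.1 y hy).le]
      rfl
    · rw [List.filter_cons_of_pos (by simpa using h.1 x hx')]
      simpa using ih h.2 hx'

lemma ent_card_filter_lt {s : Finset ℕ} {x : ℕ} (hx : x ∈ s) :
    ent s (s.filter (x < ·)).card = some x := by
  rw [ent, ← length_filter_rowList]
  exact List.getElem?_length_filter_gt (rowList_pairwise_gt s) (by simpa [rowList] using hx)

lemma lt_card_of_ent_eq_some {s : Finset ℕ} {i x : ℕ} (h : ent s i = some x) : i < s.card := by
  simpa [rowList] using (List.getElem?_eq_some_iff.1 h).1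

lemma exists_ent_eq_some {s : Finset ℕ} {i : ℕ} (h : i < s.card) : ∃ x, ent s i = some x :=
  ⟨_, List.getElem?_eq_getElem (by simpa [rowList] using h)⟩

lemma exists_ent_sdiff_union_shift {s : Finset ℕ} {a b c : ℕ} (ha : a ∈ s) (hb : b < c)
    (hc : c < a) :
    ∃ j, ent (s \ {a} ∪ {c}) j = some c ∧ ent (s \ {b} ∪ {c}) (j + 1) = some c := by
  have hfa : (s \ {a} ∪ {c}).filter (c < ·) = (s.filter (c < ·)).erase a := by
    ext
    simp only [Finset.mem_filter, Finset.mem_union, Finset.mem_sdiff, Finset.mem_erase,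
      Finset.mem_singleton]
    grind
  have hfb : (s \ {b} ∪ {c}).filter (c < ·) = s.filter (c < ·) := by
    ext
    simp only [Finset.mem_filter, Finset.mem_union, Finset.mem_sdiff, Finset.mem_singleton]
    grind
  refine ⟨_, ent_card_filter_lt (by simp), ?_⟩
  rw [hfa, Finset.card_erase_add_one (by simp [ha, hc]), ← hfb]
  exact ent_card_filter_lt (by simp)

lemma oRel.of_ent_eq_some {r : ℕ → ℕ → Prop} {s t : Finset ℕ} {i k x y : ℕ}
    (h : oRel r (ent s i) (ent t k)) (hs : ent s i = some x) (ht : ent t k = some y) : r x y := by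
  rwa [hs, ht] at h

section ConsecPair

variable {Z : Symb} {c c' d d' : ℕ}

lemma ConsecPair.ne (h : ConsecPair Z c d) : c ≠ d := by
  rintro rfl
  exact (Finset.mem_sdiff.1 h.1).2 (Finset.mem_sdiff.1 h.2.1).1

lemma ConsecPair.lt_and_lt_of_fst_eq (h : ConsecPair Z c d) (h' : ConsecPair Z c d')
    (hd : d ≠ d') : d < c ∧ c < d' ∨ d' < c ∧ c < d := by
  have := h.2.2 d' (Finset.mem_union_right _ h'.2.1)
  have := h'.2.2 d (Finset.mem_union_right _ h.2.1)
  have := h.ne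
  have := h'.ne
  omega

lemma ConsecPair.lt_and_lt_of_snd_eq (h : ConsecPair Z c d) (h' : ConsecPair Z c' d)
    (hc : c ≠ c') : c < d ∧ d < c' ∨ c' < d ∧ d < c := by
  have := h.2.2 c' (Finset.mem_union_left _ h'.1)
  have := h'.2.2 c (Finset.mem_union_left _ h.1)
  have := h.ne
  have := h'.ne
  omega

end ConsecPair

lemma DRel.false_of_shift_snd {m m' : ℕ} {Z Z' : Symb} {a b c : ℕ} (ha : a ∈ Z'.2) (hb : b < c)
    (hc : c < a) (hD : DRel Z Z' m m' Z (lam Z' ({c}, {a})))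
    (hD' : DRel Z Z' m m' Z (lam Z' ({c}, {b}))) : False := by
  obtain ⟨j, hj, hj'⟩ := exists_ent_sdiff_union_shift ha hb hc
  have hlt : j + 1 < (lam Z' ({c}, {b})).2.card := lt_card_of_ent_eq_some hj'
  obtain ⟨⟨-, -, hB⟩, hZ1, -, -, -⟩ := hD
  obtain ⟨⟨-, -, hB'⟩, -, -, -, hcard'⟩ := hD'
  obtain ⟨z, hz⟩ := exists_ent_eq_some (s := Z.1) (i := j + 1) (by
    rcases hB with ⟨_, _⟩ | ⟨_, _⟩ <;> omega)
  rcases hB with ⟨hm, hB⟩ | ⟨hm, hB⟩ <;> rcases hB' with ⟨hm', hB'⟩ | ⟨hm', hB'⟩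
  · have hcz := (hB.2.2.2.1 j).of_ent_eq_some hj hz
    have hzc := (hB'.2.2.1 (j + 1)).of_ent_eq_some hz hj'
    omega
  · omega
  · omega
  · have hcz := (hB.2.2.2.1 j).of_ent_eq_some hj hz
    have hzc := (hB'.2.2.1 (j + 1)).of_ent_eq_some hz hj'
    omega

lemma DRel.false_of_shift_fst {m m' : ℕ} {Z Z' : Symb} {a b d : ℕ} (ha : a ∈ Z'.1) (hb : b < d)
    (hd : d < a) (hD : DRel Z Z' m m' Z (lam Z' ({a}, {d})))
    (hD' : DRel Z Z' m m' Z (lam Z' ({b}, {d}))) : False := by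
  obtain ⟨j, hj, hj'⟩ := exists_ent_sdiff_union_shift ha hb hd
  have hlt : j + 1 < (lam Z' ({b}, {d})).1.card := lt_card_of_ent_eq_some hj'
  obtain ⟨⟨-, -, hB⟩, -, hZ2, -, -⟩ := hD
  obtain ⟨⟨-, -, hB'⟩, -, -, hcard', -⟩ := hD'
  obtain ⟨z, hz⟩ := exists_ent_eq_some (s := Z.2) (i := j) (by
    rcases hB with ⟨_, _⟩ | ⟨_, _⟩ <;> omega)
  rcases hB with ⟨hm, hB⟩ | ⟨hm, hB⟩ <;> rcases hB' with ⟨hm', hB'⟩ | ⟨hm', hB'⟩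
  · have hdz := (hB.2.2.2.2.2 j).of_ent_eq_some hj hz
    have hzd := (hB'.2.2.2.2.1 j).of_ent_eq_some hz hj'
    omega
  · omega
  · omega
  · have hdz := (hB.2.2.2.2.2 j).of_ent_eq_some hj hz
    have hzd := (hB'.2.2.2.2.1 j).of_ent_eq_some hz hj'
    omega

theorem stmt2_general (m m' : ℕ) (Z Z' : Symb)
    (c d c' d' : ℕ)
    (h1 : ConsecPair Z' c d) (h2 : ConsecPair Z' c' d')
    (hD1 : DRel Z Z' m m' Z (lam Z' ({c}, {d})))
    (hD2 : DRel Z Z' m m' Z (lam Z' ({c'}, {d'}))) :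
    (c = c' ∧ d = d') ∨ (c ≠ c' ∧ d ≠ d') := by
  rcases eq_or_ne c c' with rfl | hc <;> rcases eq_or_ne d d' with rfl | hd
  · exact .inl ⟨rfl, rfl⟩
  · rcases h1.lt_and_lt_of_fst_eq h2 hd with ⟨hdc, hcd'⟩ | ⟨hd'c, hcd⟩
    · exact (hD2.false_of_shift_snd (Finset.mem_sdiff.1 h2.2.1).1 hdc hcd' hD1).elim
    · exact (hD1.false_of_shift_snd (Finset.mem_sdiff.1 h1.2.1).1 hd'c hcd hD2).elim
  · rcases h1.lt_and_lt_of_snd_eq h2 hc with ⟨hcd, hdc'⟩ | ⟨hc'd, hdc⟩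
    · exact (hD2.false_of_shift_fst (Finset.mem_sdiff.1 h2.1).1 hcd hdc' hD1).elim
    · exact (hD1.false_of_shift_fst (Finset.mem_sdiff.1 h1.1).1 hc'd hdc hD2).elim
  · exact .inr ⟨hc, hd⟩

theorem stmt2 (m m' : ℕ) (Z Z' : Symb) (hm : m' = m ∨ m' = m + 1)
    (hZ : IsSpecial1 Z m) (hZ' : IsSpecial0 Z' m')
    (c d c' d' : ℕ)
    (h1 : ConsecPair Z' c d) (h2 : ConsecPair Z' c' d')
    (hD1 : DRel Z Z' m m' Z (lam Z' ({c}, {d})))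
    (hD2 : DRel Z Z' m m' Z (lam Z' ({c'}, {d'}))) :
    (c = c' ∧ d = d') ∨ (c ≠ c' ∧ d ≠ d') :=
  stmt2_general m m' Z Z' c d c' d' h1 h2 hD1 hD2
end
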